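/- Define the symmetric bilinear expression S(t¹,t²) = ∑_{{j_1,...,j_k}⊆J} D(j_1,...,j_k)² ∏_{l=1}^k a_{j_l}/(f_{j_l}(t¹) f_{j_l}(t²)), summing over unordered k-subsets of J. Then S(t,t) = (-1)^k det of the Hessian of ∑_j a_j log f_j at t. -/

import Mathlib

/-!
The Hessian of `∑ j, a j * log (f j)` is `-Bᵀ * diagonal c * B` with `B = (b j i)` and
`c j = a j / f j t ^ 2`, so `(-1) ^ k` times its determinant is `det (Bᵀ * diagonal c * B)`, and the
Cauchy–Binet formula expands this over the `k`-subsets `s` of rows as `∑ det (B_s) ^ 2 * ∏ c`.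
Cauchy–Binet itself: expanding `det (A * B)` by multilinearity in the rows gives a sum over maps
`g : Fin k → ι`; non-injective `g` repeat a row and contribute nothing, and an injective `g` is
uniquely the increasing enumeration of its image composed with a permutation, whose sign is absorbed
into `det A_s`.
-/

open Finset Matrix Equiv

theorem Finset.sum_injective_eq_sum_powersetCard_sum_perm {ι M : Type*} [Fintype ι]
    [LinearOrder ι] [AddCommMonoid M] {k : ℕ} (F : (Fin k → ι) → M) :
    ∑ g with Function.Injective g, F g =
      ∑ s ∈ (univ.powersetCard k).attach, ∑ σ : Perm (Fin k),
        F (s.1.orderEmbOfFin (mem_powersetCard.mp s.2).2 ∘ σ) := by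
  have himage (s : Finset ι) (hs : s.card = k) (σ : Perm (Fin k)) :
      univ.image (s.orderEmbOfFin hs ∘ σ) = s := by
    rw [← image_image, image_univ_equiv, image_orderEmbOfFin_univ]
  rw [← sum_product']
  symm
  refine sum_bij (fun p _ => p.1.1.orderEmbOfFin (mem_powersetCard.mp p.1.2).2 ∘ p.2) ?_ ?_ ?_
    (fun _ _ => rfl)
  · intro p _
    simpa using (p.1.1.orderEmbOfFin _).injective.comp p.2.injective
  · rintro ⟨⟨s, hs⟩, σ⟩ - ⟨⟨t, ht⟩, τ⟩ - h
    obtain rfl : s = t := by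
      rw [← himage s (mem_powersetCard.mp hs).2 σ, ← himage t (mem_powersetCard.mp ht).2 τ]
      exact congrArg (univ.image ·) h
    exact Prod.ext rfl (Equiv.ext fun l => (s.orderEmbOfFin _).injective (congrFun h l))
  · intro g hg
    have hinj : Function.Injective g := (mem_filter.mp hg).2
    have hcard : (univ.image g).card = k := by
      rw [card_image_of_injective _ hinj, card_univ, Fintype.card_fin]
    have hrange (l : Fin k) : ∃ i, (univ.image g).orderEmbOfFin hcard i = g l := by
      rw [← Set.mem_range, range_orderEmbOfFin]
      simp
    choose h hh using hrange
    have hg : (univ.image g).orderEmbOfFin hcard ∘ h = g := funext hh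
    have hbij : Function.Bijective h :=
      Finite.injective_iff_bijective.mp (Function.Injective.of_comp (hg ▸ hinj))
    refine ⟨(⟨univ.image g, mem_powersetCard.mpr ⟨subset_univ _, hcard⟩⟩, .ofBijective h hbij),
      mem_product.mpr ⟨mem_attach _ _, mem_univ _⟩, hg⟩

namespace Matrix

variable {R ι m : Type*} [CommRing R]

theorem det_mul_eq_sum_fun [Fintype ι] [Fintype m] [DecidableEq m] (A : Matrix m ι R)
    (B : Matrix ι m R) :
    (A * B).det = ∑ g : m → ι, (∏ i, A i (g i)) * (B.submatrix g id).det := by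
  have hrows : A * B = of fun i => ∑ j, A i j • B j := by
    ext i l
    simp [mul_apply, Finset.sum_apply]
  rw [det, hrows]
  refine ((detRowAlternating (R := R) (n := m)).toMultilinearMap.map_sum _).trans ?_
  simp only [MultilinearMap.map_smul_univ, smul_eq_mul]
  rfl

theorem det_mul_eq_sum_injective [Fintype ι] [DecidableEq ι] [Fintype m] [DecidableEq m]
    (A : Matrix m ι R) (B : Matrix ι m R) :
    (A * B).det =
      ∑ g with Function.Injective g, (∏ i, A i (g i)) * (B.submatrix g id).det := by
  rw [det_mul_eq_sum_fun, sum_filter_of_ne]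
  intro g _ hg
  contrapose! hg
  obtain ⟨i, j, hgij, hij⟩ := Function.not_injective_iff.mp hg
  rw [det_zero_of_row_eq hij (by ext; simp [hgij]), mul_zero]

theorem sum_perm_mul_det_submatrix_comp {k : ℕ} (A : Matrix (Fin k) ι R) (B : Matrix ι (Fin k) R)
    (e : Fin k → ι) :
    ∑ σ : Perm (Fin k), (∏ i, A i (e (σ i))) * (B.submatrix (e ∘ σ) id).det =
      (A.submatrix id e).det * (B.submatrix e id).det := by
  have hperm (σ : Perm (Fin k)) :
      (B.submatrix (e ∘ σ) id).det = Perm.sign σ * (B.submatrix e id).det :=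
    det_permute σ (B.submatrix e id)
  rw [← det_transpose, det_apply', sum_mul]
  refine sum_congr rfl fun σ _ => ?_
  rw [hperm]
  simp only [transpose_apply, submatrix_apply, id]
  ring

theorem det_mul_eq_sum_powersetCard [Fintype ι] [LinearOrder ι] {k : ℕ}
    (A : Matrix (Fin k) ι R) (B : Matrix ι (Fin k) R) :
    (A * B).det = ∑ s ∈ (univ.powersetCard k).attach,
      (A.submatrix id (s.1.orderEmbOfFin (mem_powersetCard.mp s.2).2)).det *
        (B.submatrix (s.1.orderEmbOfFin (mem_powersetCard.mp s.2).2) id).det := by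
  rw [det_mul_eq_sum_injective, sum_injective_eq_sum_powersetCard_sum_perm]
  exact sum_congr rfl fun s _ => sum_perm_mul_det_submatrix_comp A B _

theorem det_transpose_mul_diagonal_mul_eq_sum_powersetCard [Fintype ι] [LinearOrder ι]
    {k : ℕ} (B : Matrix ι (Fin k) R) (c : ι → R) :
    (Bᵀ * diagonal c * B).det = ∑ s ∈ (univ.powersetCard k).attach,
      (B.submatrix (s.1.orderEmbOfFin (mem_powersetCard.mp s.2).2) id).det ^ 2 *
        ∏ l, c (s.1.orderEmbOfFin (mem_powersetCard.mp s.2).2 l) := by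
  rw [det_mul_eq_sum_powersetCard]
  refine sum_congr rfl fun s _ => ?_
  set e := s.1.orderEmbOfFin (mem_powersetCard.mp s.2).2
  have hsub : (Bᵀ * diagonal c).submatrix id e = (B.submatrix e id)ᵀ * diagonal (c ∘ e) := by
    ext i l
    simp [mul_diagonal]
  rw [hsub, det_mul, det_transpose, det_diagonal]
  simp only [Function.comp_apply]
  ring

end Matrix

theorem stmt3_general {k n : ℕ} (b : Fin n → Fin k → ℂ) (a : Fin n → ℂ)
    (f : Fin n → (Fin k → ℂ) → ℂ)
    (S : (Fin k → ℂ) → (Fin k → ℂ) → ℂ)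
    (hS : ∀ t1 t2, S t1 t2 =
      ∑ s ∈ ((Finset.univ : Finset (Fin n)).powersetCard k).attach,
        (Matrix.of fun i l : Fin k =>
            b (s.1.orderEmbOfFin ((Finset.mem_powersetCard.mp s.2).2) l) i).det ^ 2 *
          ∏ l : Fin k,
            a (s.1.orderEmbOfFin ((Finset.mem_powersetCard.mp s.2).2) l) /
              (f (s.1.orderEmbOfFin ((Finset.mem_powersetCard.mp s.2).2) l) t1 *
               f (s.1.orderEmbOfFin ((Finset.mem_powersetCard.mp s.2).2) l) t2))
    (t : Fin k → ℂ) :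
    S t t = (-1 : ℂ) ^ k *
      (Matrix.of fun i l : Fin k => -∑ j, a j * (b j i * b j l) / (f j t) ^ 2).det := by
  have hHess : (Matrix.of fun i l : Fin k => -∑ j, a j * (b j i * b j l) / (f j t) ^ 2) =
      -((of b)ᵀ * diagonal (fun j => a j / (f j t) ^ 2) * of b) := by
    ext i l
    rw [of_apply, Matrix.neg_apply, mul_apply, neg_inj]
    exact sum_congr rfl fun j _ => by
      simp only [mul_diagonal, transpose_apply, of_apply]
      ring
  rw [hHess, det_neg, Fintype.card_fin, ← mul_assoc, ← mul_pow, neg_one_mul, neg_neg, one_pow,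
    one_mul, det_transpose_mul_diagonal_mul_eq_sum_powersetCard, hS]
  refine sum_congr rfl fun s _ => ?_
  rw [← det_transpose]
  congr 1
  exact prod_congr rfl fun l _ => by rw [sq]

/-- The symmetric bilinear expression
`S(t1,t2) = ∑_{{j₁,…,j_k}⊆J} D(j₁,…,j_k)² ∏ a_{j_l}/(f_{j_l}(t1) f_{j_l}(t2))`
evaluated on the diagonal equals `(-1)^k det Hess(log Φ)(t)`. -/
theorem stmt3 {k n : ℕ} (b0 : Fin n → ℂ) (b : Fin n → Fin k → ℂ) (a : Fin n → ℂ)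
    (f : Fin n → (Fin k → ℂ) → ℂ)
    (hf : ∀ j s, f j s = b0 j + ∑ m, b j m * s m)
    (S : (Fin k → ℂ) → (Fin k → ℂ) → ℂ)
    (hS : ∀ t1 t2, S t1 t2 =
      ∑ s ∈ ((Finset.univ : Finset (Fin n)).powersetCard k).attach,
        (Matrix.of fun i l : Fin k =>
            b (s.1.orderEmbOfFin ((Finset.mem_powersetCard.mp s.2).2) l) i).det ^ 2 *
          ∏ l : Fin k,
            a (s.1.orderEmbOfFin ((Finset.mem_powersetCard.mp s.2).2) l) /
              (f (s.1.orderEmbOfFin ((Finset.mem_powersetCard.mp s.2).2) l) t1 *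
               f (s.1.orderEmbOfFin ((Finset.mem_powersetCard.mp s.2).2) l) t2))
    (t : Fin k → ℂ) (hft : ∀ j, f j t ≠ 0) :
    S t t = (-1 : ℂ) ^ k *
      (Matrix.of fun i l : Fin k => -∑ j, a j * (b j i * b j l) / (f j t) ^ 2).det :=
  stmt3_general b a f S hS t
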